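/- Let (M, Ω) be a multisymplectic manifold, H : M → ℝ a smooth admissible Hamiltonian, and define for X ∈ ΛⁿTₘM the Hamilton condition X ⌟ Ω = (−1)ⁿ dH_m. For observable (n−1)-forms F and G define {H, F}(m) := dF(X) for any X satisfying the Hamilton condition at m (this is well-defined). Then for any Hamiltonian n-curve Γ (an n-dimensional submanifold whose tangent n-vectors satisfy the Hamilton condition up to positive rescaling), one has {H,F}·dG|_Γ = {H,G}·dF|_Γ, i.e. for every decomposable nonzero n-vector X tangent to Γ at m, {H,F}(m)·dG(X) = {H,G}(m)·dF(X). -/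

import Mathlib

open scoped BigOperators

/-- The exterior derivative of a (not necessarily bundled) `k`-form on a normed space. -/
noncomputable def extDerivUnbundled {E : Type*} [NormedAddCommGroup E] [NormedSpace ℝ E] {k : ℕ}
    (ω : E → (Fin k → E) → ℝ) (x : E) (v : Fin (k + 1) → E) : ℝ :=
  ∑ i : Fin (k + 1), (-1 : ℝ) ^ (i : ℕ) * fderiv ℝ (fun y => ω y (v ∘ i.succAbove)) x (v i)

/-- The Hamilton condition `X ⌟ Ω = (-1)ⁿ dH` at `m`, for a decomposable `n`-vector
modelled by a tuple `X` of `n` tangent vectors.  (Here the paper's `n` is `n+1`.) -/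
noncomputable def IsHamTuple {E : Type*} [NormedAddCommGroup E] [NormedSpace ℝ E] {n : ℕ}
    (Ω : E → (E [⋀^Fin (n + 2)]→ₗ[ℝ] ℝ)) (H : E → ℝ) (m : E) (X : Fin (n + 1) → E) : Prop :=
  ∀ w : E, Ω m (Fin.snoc X w) = (-1 : ℝ) ^ (n + 1) * fderiv ℝ H m w

/-- for a multisymplectic manifold `(M,Ω)`, an admissible Hamiltonian `H` and
observable `(n-1)`-forms `F`, `G`, with the pseudobracket `{H,F}(m) := dF(X)` for any
`X ∈ [X]^H_m`, one has `{H,F}·dG = {H,G}·dF` along every Hamiltonian `n`-curve, i.e. for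
every nonzero decomposable `n`-vector `X` tangent to such a curve (a positive rescaling of
which satisfies the Hamilton condition). -/
lemma fderiv_const_mul' {E : Type*} [NormedAddCommGroup E] [NormedSpace ℝ E]
    (c : ℝ) (hc : c ≠ 0) (f : E → ℝ) (x : E) :
    fderiv ℝ (fun y => c * f y) x = c • fderiv ℝ f x := by
  by_cases h : DifferentiableAt ℝ f x
  · exact fderiv_const_mul h c
  · have h' : ¬ DifferentiableAt ℝ (fun y => c * f y) x := by
      intro hd
      have h2 : DifferentiableAt ℝ f x := by
        simpa [inv_mul_cancel_left₀ hc] using hd.const_mul c⁻¹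
      exact h h2
    rw [fderiv_zero_of_not_differentiableAt h, fderiv_zero_of_not_differentiableAt h', smul_zero]

lemma extDeriv_smul_first {E : Type*} [NormedAddCommGroup E] [NormedSpace ℝ E] {n : ℕ}
    (ω : E → (E [⋀^Fin n]→ₗ[ℝ] ℝ)) (m : E) (X : Fin (n + 1) → E) (c : ℝ) (hc : c ≠ 0) :
    extDerivUnbundled (fun y => ⇑(ω y)) m (Function.update X 0 (c • X 0))
      = c * extDerivUnbundled (fun y => ⇑(ω y)) m X := by
  unfold extDerivUnbundled
  rw [Finset.mul_sum]
  refine Finset.sum_congr rfl fun i _ => ?_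
  set Y := Function.update X 0 (c • X 0) with hY
  induction i using Fin.cases with
  | zero =>
      have h1 : Y ∘ (0 : Fin (n+1)).succAbove = X ∘ (0 : Fin (n+1)).succAbove := by
        funext j
        simp [hY, Function.comp, Fin.succAbove, Function.update, (Fin.succ_ne_zero j)]
      have h2 : Y 0 = c • X 0 := by simp [hY]
      rw [h1, h2, (fderiv ℝ (fun y => ω y (X ∘ (0:Fin (n+1)).succAbove)) m).map_smul]
      simp only [smul_eq_mul]
      ring
  | succ j =>
      haveI : NeZero n := ⟨j.pos.ne'⟩
      have h0 : (Fin.succ j).succAbove 0 = 0 := by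
        simp [Fin.succAbove, Fin.lt_iff_val_lt_val]
      have h1 : Y ∘ (Fin.succ j).succAbove
          = Function.update (X ∘ (Fin.succ j).succAbove) 0
              (c • (X ∘ (Fin.succ j).succAbove) 0) := by
        funext k
        by_cases hk : k = 0
        · subst hk; simp [hY, Function.comp, h0]
        · have hne : (Fin.succ j).succAbove k ≠ 0 := by
            intro h
            exact hk (Fin.succAbove_right_injective (p := Fin.succ j) (h.trans h0.symm))
          simp [hY, Function.comp, Function.update, hk, hne]
      have h2 : Y (Fin.succ j) = X (Fin.succ j) := by
        simp [hY, Function.update, Fin.succ_ne_zero j]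
      have h3 : (fun y => ω y (Y ∘ (Fin.succ j).succAbove))
          = fun y => c * ω y (X ∘ (Fin.succ j).succAbove) := by
        funext y
        rw [h1, (ω y).map_update_smul, Function.update_eq_self]
        rfl
      rw [h3, h2, fderiv_const_mul' c hc]
      simp only [ContinuousLinearMap.smul_apply, smul_eq_mul]
      ring

theorem stmt5 {E : Type*} [NormedAddCommGroup E] [NormedSpace ℝ E] (n : ℕ)
    (Ω : E → (E [⋀^Fin (n + 2)]→ₗ[ℝ] ℝ)) (H : E → ℝ)
    (F G : E → (E [⋀^Fin n]→ₗ[ℝ] ℝ))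
    (O : E → Set (Fin (n + 1) → E))
    (hΩclosed : ∀ x (v : Fin (n + 3) → E), extDerivUnbundled (fun y => ⇑(Ω y)) x v = 0)
    (hΩnondeg : ∀ m (ξ : E), (∀ v : Fin (n + 1) → E, Ω m (Fin.cons ξ v) = 0) → ξ = 0)
    (hH : ContDiff ℝ (⊤ : ℕ∞) H)
    (hOopen : ∀ m, IsOpen (O m)) (hOdense : ∀ m, Dense (O m))
    (hadm : ∀ m X, IsHamTuple Ω H m X → X ∈ O m)
    (hFobs : ∀ m, ∀ X ∈ O m, ∀ X' ∈ O m,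
      (∀ w : E, Ω m (Fin.snoc X w) = Ω m (Fin.snoc X' w)) →
      extDerivUnbundled (fun y => ⇑(F y)) m X = extDerivUnbundled (fun y => ⇑(F y)) m X')
    (hGobs : ∀ m, ∀ X ∈ O m, ∀ X' ∈ O m,
      (∀ w : E, Ω m (Fin.snoc X w) = Ω m (Fin.snoc X' w)) →
      extDerivUnbundled (fun y => ⇑(G y)) m X = extDerivUnbundled (fun y => ⇑(G y)) m X') :
    ∀ m (XF XG X : Fin (n + 1) → E),
      IsHamTuple Ω H m XF → IsHamTuple Ω H m XG →
      (∃ c : ℝ, 0 < c ∧ IsHamTuple Ω H m (Function.update X 0 (c • X 0))) →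
      extDerivUnbundled (fun y => ⇑(F y)) m XF * extDerivUnbundled (fun y => ⇑(G y)) m X
        = extDerivUnbundled (fun y => ⇑(G y)) m XG * extDerivUnbundled (fun y => ⇑(F y)) m X := by
  
  intro m XF XG X hF hG ⟨c, hc, hY⟩
  set Y := Function.update X 0 (c • X 0) with hYdef
  have hXFO := hadm m XF hF
  have hXGO := hadm m XG hG
  have hYO := hadm m Y hY
  have hFeq : extDerivUnbundled (fun y => ⇑(F y)) m XF = extDerivUnbundled (fun y => ⇑(F y)) m Y :=
    hFobs m XF hXFO Y hYO (fun w => (hF w).trans (hY w).symm)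
  have hGeq : extDerivUnbundled (fun y => ⇑(G y)) m XG = extDerivUnbundled (fun y => ⇑(G y)) m Y :=
    hGobs m XG hXGO Y hYO (fun w => (hG w).trans (hY w).symm)
  have hFY : extDerivUnbundled (fun y => ⇑(F y)) m Y = c * extDerivUnbundled (fun y => ⇑(F y)) m X :=
    extDeriv_smul_first F m X c hc.ne'
  have hGY : extDerivUnbundled (fun y => ⇑(G y)) m Y = c * extDerivUnbundled (fun y => ⇑(G y)) m X :=
    extDeriv_smul_first G m X c hc.ne'
  rw [hFeq, hGeq, hFY, hGY]
  ring
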